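/- Let q be a prime power, r a divisor of q−1 with r ≥ 2, G ≤ F_q^* of order r, V ≤ F_{q^m} of F_q-dimension t, and φ(x) = ∏_{g∈G}∏_{β∈V}(x+g+β). Then the number of distinct values taken by φ on F_{q^m} is exactly 1 + (q^{m-t}−1)/r. -/

import Mathlib

open Polynomial Finset
open scoped Classical

/-- The (additive) coset `a + V` of a set `V`. -/
def coset {K : Type*} [Add K] (V : Set K) (a : K) : Set K := {x | ∃ v ∈ V, x = a + v}

/-- The polynomial `φ(x) = ∏_{g ∈ G} ∏_{β ∈ V} (x + g + β)`. -/
noncomputable def phiPoly {Fq K : Type*} [Field Fq] [Field K] [Fintype K] [Algebra Fq K]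
    (G : Subgroup Kˣ) (V : Submodule Fq K) : Polynomial K :=
  ∏ g : G, ∏ β : V, (X + C ((g : Kˣ) : K) + C (β : K))

/-!
`φ` is invariant under the affine maps `x ↦ g x + v` (`g ∈ G`, `v ∈ V`): translating by `v`
permutes the factors, and multiplying by `g` permutes them up to the scalar
`g ^ (|G| |V|) = 1`. As `G` consists of `F_q`-scalars, the orbit of `x ∉ V` has exactly
`|G| |V| = deg φ` points, and a fiber of the nonconstant `φ` has at most `deg φ` points; so the
fibers of `φ` are `V` and orbits of size `r q^t`, whence `q^m = q^t (1 + (N - 1) r)` for the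
number `N` of values.
-/

lemma Submodule.eq_of_smul_add_eq_smul_add {F M : Type*} [Field F] [AddCommGroup M] [Module F M]
    (V : Submodule F M) {x : M} (hx : x ∉ V) {a b : F} {v w : M} (hv : v ∈ V) (hw : w ∈ V)
    (h : a • x + v = b • x + w) : a = b := by
  by_contra hab
  have hdiff : (a - b) • x = w - v := by
    rw [sub_smul, sub_eq_sub_iff_add_eq_add, h, add_comm]
  have : (a - b) • x ∈ V := hdiff ▸ V.sub_mem hw hv
  exact hx ((V.smul_mem_iff (sub_ne_zero.2 hab)).1 this)

lemma Polynomial.card_filter_eval_eq_le {R : Type*} [CommRing R] [IsDomain R] [Fintype R]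
    (p : R[X]) (hp : 0 < p.natDegree) (c : R) : #{x | p.eval x = c} ≤ p.natDegree := by
  have hdeg : (p - C c).natDegree = p.natDegree := natDegree_sub_C
  have hne : p - C c ≠ 0 := fun h => by simp [h] at hdeg; omega
  rw [← hdeg]
  refine card_le_degree_of_subset_roots fun x hx => ?_
  simp_all [mem_roots hne]

lemma Finset.card_univ_eq_add_mul_of_card_fiber {α β : Type*} [Fintype α] [DecidableEq β]
    (f : α → β) (a₀ : α) {A B : ℕ} (h₀ : #{a | f a = f a₀} = A)
    (h : ∀ a, f a ≠ f a₀ → #{x | f x = f a} = B) :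
    Fintype.card α = A + (#(univ.image f) - 1) * B := by
  have hmem : f a₀ ∈ univ.image f := mem_image_of_mem f (mem_univ a₀)
  have hrest : ∀ b ∈ (univ.image f).erase (f a₀), #{a | f a = b} = B := by
    intro b hb
    obtain ⟨hne, hb⟩ := mem_erase.1 hb
    obtain ⟨a, -, rfl⟩ := mem_image.1 hb
    exact h a hne
  rw [← card_univ, card_eq_sum_card_image f univ, ← add_sum_erase _ _ hmem, h₀,
    sum_congr rfl hrest, sum_const, card_erase_of_mem hmem, smul_eq_mul]

section PhiPoly

variable {Fq K : Type*} [Field Fq] [Field K] [Algebra Fq K] {G : Subgroup Kˣ}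
  {V : Submodule Fq K}

lemma Submodule.algebraMap_mul_mem (a : Fq) {v : K} (hv : v ∈ V) : algebraMap Fq K a * v ∈ V :=
  Algebra.smul_def a v ▸ V.smul_mem a hv

variable [Fintype K]

lemma prod_submodule_comp_mul {M : Type*} [CommMonoid M] {c : K} (hc : c ≠ 0)
    (hcV : ∀ v ∈ V, c * v ∈ V) (f : K → M) : ∏ β : V, f (c * β) = ∏ β : V, f β := by
  let e : V → V := fun β => ⟨c * β, hcV _ β.2⟩
  have he : Function.Injective e := fun _ _ h =>
    Subtype.ext (mul_left_cancel₀ hc (congrArg Subtype.val h))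
  exact Fintype.prod_bijective e (Finite.injective_iff_bijective.1 he) _ _ fun _ => rfl

variable (G V) in
lemma eval_phiPoly (x : K) :
    (phiPoly G V).eval x = ∏ g : G, ∏ β : V, (x + ((g : Kˣ) : K) + β) := by
  simp [phiPoly, eval_prod]

variable (G V) in
lemma natDegree_phiPoly : (phiPoly G V).natDegree = Fintype.card G * Fintype.card V := by
  have hprod : phiPoly G V = ∏ p : G × V, (X + C (((p.1 : Kˣ) : K) + p.2)) := by
    simp [phiPoly, ← univ_product_univ, prod_product, C_add, add_assoc]
  rw [hprod, natDegree_prod_of_monic _ _ fun _ _ => monic_X_add_C _]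
  simp only [natDegree_X_add_C, sum_const, card_univ, Fintype.card_prod, smul_eq_mul, mul_one]

lemma eval_phiPoly_add (x : K) {v : K} (hv : v ∈ V) :
    (phiPoly G V).eval (x + v) = (phiPoly G V).eval x := by
  simp only [eval_phiPoly]
  refine prod_congr rfl fun g _ => Fintype.prod_equiv (Equiv.addLeft ⟨v, hv⟩) _ _ fun β => ?_
  simp only [Equiv.coe_addLeft, Submodule.coe_add]
  ring

lemma eval_phiPoly_mul (hGF : ∀ g : G, ∃ a : Fq, algebraMap Fq K a = ((g : Kˣ) : K))
    (g : G) (x : K) : (phiPoly G V).eval (((g : Kˣ) : K) * x) = (phiPoly G V).eval x := by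
  obtain ⟨a, ha⟩ := hGF g
  set c : K := ((g : Kˣ) : K)
  have hc : c ≠ 0 := Units.ne_zero _
  have hpow : c ^ (Fintype.card V * Fintype.card G) = 1 := by
    rw [mul_comm, pow_mul, ← Units.val_pow_eq_pow_val, ← Subgroup.coe_pow, pow_card_eq_one]
    simp
  calc (phiPoly G V).eval (c * x)
      = ∏ h : G, ∏ β : V, (c * x + c * ((h : Kˣ) : K) + c * β) := by
        rw [eval_phiPoly]
        refine (Fintype.prod_bijective _ (Group.mulLeft_bijective g) _ _ fun h => ?_).symm
        rw [← prod_submodule_comp_mul hc fun _ hv => ha ▸ V.algebraMap_mul_mem a hv]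
        simp [c]
    _ = ∏ h : G, ∏ β : V, c * (x + ((h : Kˣ) : K) + β) := by simp only [mul_add]
    _ = c ^ (Fintype.card V * Fintype.card G) * (phiPoly G V).eval x := by
        simp only [prod_mul_distrib, prod_const, card_univ, ← pow_mul, eval_phiPoly]
    _ = (phiPoly G V).eval x := by rw [hpow, one_mul]

variable (G V) in
noncomputable def affineOrbit (x : K) : Finset K :=
  univ.image fun p : G × V => ((p.1 : Kˣ) : K) * x + p.2

lemma mem_affineOrbit {x y : K} :
    y ∈ affineOrbit G V x ↔ ∃ g : G, ∃ v : V, ((g : Kˣ) : K) * x + v = y := by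
  simp [affineOrbit]

lemma eval_phiPoly_of_mem_affineOrbit
    (hGF : ∀ g : G, ∃ a : Fq, algebraMap Fq K a = ((g : Kˣ) : K)) {x y : K}
    (hy : y ∈ affineOrbit G V x) : (phiPoly G V).eval y = (phiPoly G V).eval x := by
  obtain ⟨g, v, rfl⟩ := mem_affineOrbit.1 hy
  rw [eval_phiPoly_add _ v.2, eval_phiPoly_mul hGF]

lemma not_mem_of_mem_affineOrbit
    (hGF : ∀ g : G, ∃ a : Fq, algebraMap Fq K a = ((g : Kˣ) : K)) {x y : K} (hx : x ∉ V)
    (hy : y ∈ affineOrbit G V x) : y ∉ V := by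
  obtain ⟨g, v, rfl⟩ := mem_affineOrbit.1 hy
  obtain ⟨a, ha⟩ := hGF g
  have ha0 : a ≠ 0 := by rintro rfl; exact Units.ne_zero (g : Kˣ) (by simpa using ha.symm)
  rw [V.add_mem_iff_left v.2, ← ha, ← Algebra.smul_def, V.smul_mem_iff ha0]
  exact hx

lemma card_affineOrbit (hGF : ∀ g : G, ∃ a : Fq, algebraMap Fq K a = ((g : Kˣ) : K))
    {x : K} (hx : x ∉ V) : #(affineOrbit G V x) = Fintype.card G * Fintype.card V := by
  rw [affineOrbit, card_image_of_injective _ ?_, card_univ, Fintype.card_prod]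
  rintro ⟨g₁, v₁⟩ ⟨g₂, v₂⟩ h
  obtain ⟨a₁, ha₁⟩ := hGF g₁
  obtain ⟨a₂, ha₂⟩ := hGF g₂
  have h' : a₁ • x + v₁ = a₂ • x + v₂ := by simpa [Algebra.smul_def, ha₁, ha₂] using h
  have hg : g₁ = g₂ := Subtype.ext <| Units.ext <| by
    rw [← ha₁, ← ha₂, V.eq_of_smul_add_eq_smul_add hx v₁.2 v₂.2 h']
  subst hg
  simpa using h

lemma card_fiber_phiPoly_of_not_mem
    (hGF : ∀ g : G, ∃ a : Fq, algebraMap Fq K a = ((g : Kˣ) : K)) {x : K} (hx : x ∉ V) :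
    #{y | (phiPoly G V).eval y = (phiPoly G V).eval x} = Fintype.card G * Fintype.card V := by
  have hpos : 0 < Fintype.card G * Fintype.card V := Nat.mul_pos Fintype.card_pos Fintype.card_pos
  refine le_antisymm ?_ ?_
  · rw [← natDegree_phiPoly G V]
    exact card_filter_eval_eq_le _ (natDegree_phiPoly G V ▸ hpos) _
  · rw [← card_affineOrbit hGF hx]
    exact card_le_card fun y hy => by simp [eval_phiPoly_of_mem_affineOrbit hGF hy]

lemma eval_phiPoly_eq_eval_zero_iff
    (hGF : ∀ g : G, ∃ a : Fq, algebraMap Fq K a = ((g : Kˣ) : K)) {y : K} :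
    (phiPoly G V).eval y = (phiPoly G V).eval 0 ↔ y ∈ V := by
  refine ⟨fun hy => ?_, fun hy => by simpa using eval_phiPoly_add 0 hy⟩
  by_contra hyV
  set S : Finset K := {z | z ∈ V}
  have hdisj : Disjoint (affineOrbit G V y) S := disjoint_left.2 fun z hz hzS =>
    not_mem_of_mem_affineOrbit hGF hyV hz (by simpa [S] using hzS)
  have hsub : affineOrbit G V y ∪ S ⊆
      ({z | (phiPoly G V).eval z = (phiPoly G V).eval y} : Finset K) := by
    intro z hz
    rcases mem_union.1 hz with hz | hz
    · simp [eval_phiPoly_of_mem_affineOrbit hGF hz]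
    · simpa [hy] using eval_phiPoly_add 0 (by simpa [S] using hz : z ∈ V)
  have hcard := card_le_card hsub
  rw [card_union_of_disjoint hdisj, card_affineOrbit hGF hyV,
    card_fiber_phiPoly_of_not_mem hGF hyV] at hcard
  have hS : 0 < #S := card_pos.2 ⟨0, by simp [S]⟩
  omega

end PhiPoly

lemma Nat.pow_sub_eq_of_pow_eq_mul {q m t k : ℕ} (hq : 1 < q) (h : q ^ m = q ^ t * k) :
    q ^ (m - t) = k := by
  have htm : t ≤ m := (Nat.pow_dvd_pow_iff_le_right hq).1 ⟨k, h⟩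
  rw [← Nat.pow_div htm (by omega), h, Nat.mul_div_cancel_left _ (by positivity)]

theorem stmt16_general (q r m t : ℕ)
    (Fq K : Type*) [Field Fq] [Fintype Fq] [Field K] [Fintype K] [Algebra Fq K]
    (hcq : Fintype.card Fq = q) (hcK : Fintype.card K = q ^ m)
    (V : Submodule Fq K) (hV : Module.finrank Fq V = t)
    (G : Subgroup Kˣ) (hG : Nat.card G = r)
    (hGsub : ∀ g : G, ∃ a : Fq, algebraMap Fq K a = ((g : Kˣ) : K)) :
    (Finset.image (fun x : K => (phiPoly G V).eval x) Finset.univ).card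
      = 1 + (q ^ (m - t) - 1) / r := by
  set N := #(univ.image fun x : K => (phiPoly G V).eval x)
  have hcardV : Fintype.card V = q ^ t := by rw [Module.card_eq_pow_finrank (K := Fq), hcq, hV]
  have hcardG : Fintype.card G = r := by rw [← Nat.card_eq_fintype_card, hG]
  have hfiber₀ : #{y | (phiPoly G V).eval y = (phiPoly G V).eval 0} = q ^ t := by
    simp only [eval_phiPoly_eq_eval_zero_iff hGsub, ← hcardV, Fintype.card_subtype]
  have hfiber : ∀ x, (phiPoly G V).eval x ≠ (phiPoly G V).eval 0 →
      #{y | (phiPoly G V).eval y = (phiPoly G V).eval x} = r * q ^ t := fun x hx => by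
    rw [card_fiber_phiPoly_of_not_mem hGsub (mt (eval_phiPoly_eq_eval_zero_iff hGsub).2 hx),
      hcardG, hcardV]
  have hq : 1 < q := hcq ▸ Fintype.one_lt_card
  have hr : 0 < r := hcardG ▸ Fintype.card_pos
  have hN : 0 < N := card_pos.2 ⟨_, mem_image_of_mem _ (mem_univ 0)⟩
  have hcount : q ^ (m - t) = 1 + (N - 1) * r := by
    refine Nat.pow_sub_eq_of_pow_eq_mul hq ?_
    rw [← hcK, card_univ_eq_add_mul_of_card_fiber _ 0 hfiber₀ hfiber]
    ring
  rw [hcount, Nat.add_sub_cancel_left, Nat.mul_div_cancel _ hr]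
  omega

/-- for `r ≥ 2`, the number of distinct values taken by `φ` on
`F_{q^m}` is exactly `1 + (q^{m-t} - 1)/r`. -/
theorem stmt16 (q r m t : ℕ) (hq : IsPrimePow q) (hm : 1 ≤ m) (ht : t ≤ m - 1)
    (hr : r ∣ q - 1)
    (Fq K : Type*) [Field Fq] [Fintype Fq] [Field K] [Fintype K] [Algebra Fq K]
    (hcq : Fintype.card Fq = q) (hcK : Fintype.card K = q ^ m)
    (V : Submodule Fq K) (hV : Module.finrank Fq V = t)
    (G : Subgroup Kˣ) (hG : Nat.card G = r)
    (hGsub : ∀ g : G, ∃ a : Fq, algebraMap Fq K a = ((g : Kˣ) : K))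
    (hr2 : 2 ≤ r) :
    (Finset.image (fun x : K => (phiPoly G V).eval x) Finset.univ).card
      = 1 + (q ^ (m - t) - 1) / r :=
  stmt16_general q r m t Fq K hcq hcK V hV G hG hGsub
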